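/- For every integer n ≥ 0, the finite product identity (1+z)·∏_{j=0}^{n-1}(1-z q^j)(1-z^{-1} q^j) = ∑_{j=-n}^{n+1} (-1)^{j+1} · [(q;q)_{2n} / ((q;q)_{n+j} (q;q)_{n-j+1})] · (1-q^{2j-1}) · z^j · q^{j(j-3)/2 + 1} holds in the ring of Laurent polynomials in z over the field of rational functions in q. -/
import Mathlib


open LaurentPolynomial

/-- The field of rational functions in `q`. -/
noncomputable abbrev F16 : Type := RatFunc ℚ

/-- The variable `q`. -/
noncomputable def q16 : F16 := RatFunc.X

/-- The finite q-Pochhammer symbol `(q;q)_m = ∏_{i=1}^m (1-q^i)`. -/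
noncomputable def P16 (m : ℕ) : F16 := ∏ i ∈ Finset.Icc 1 m, (1 - q16 ^ i)

lemma qne0 : (q16 : F16) ≠ 0 := RatFunc.X_ne_zero

lemma qpow_ne_one (i : ℕ) (hi : 1 ≤ i) : (q16 : F16) ^ i ≠ 1 := by
  intro h
  have h2 : algebraMap (Polynomial ℚ) F16 (Polynomial.X ^ i) = algebraMap (Polynomial ℚ) F16 1 := by
    rw [map_pow, map_one, RatFunc.algebraMap_X]; exact h
  have h3 := RatFunc.algebraMap_injective ℚ h2
  have := congrArg Polynomial.natDegree h3
  simp [Polynomial.natDegree_X_pow] at this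
  omega

lemma oneSub (k : ℕ) : (1 : F16) - q16 ^ (k+1) ≠ 0 := by
  intro h
  exact qpow_ne_one (k+1) (by omega) (by linear_combination -h)

lemma Pne0 (m : ℕ) : P16 m ≠ 0 := by
  unfold P16
  apply Finset.prod_ne_zero_iff.2
  intro i hi
  obtain ⟨h1, _⟩ := Finset.mem_Icc.1 hi
  obtain ⟨k, rfl⟩ := Nat.exists_eq_add_of_le h1
  rw [Nat.add_comm] at hi ⊢
  exact oneSub k

lemma Psucc (m : ℕ) : P16 (m+1) = P16 m * (1 - q16 ^ (m+1)) := by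
  unfold P16
  rw [Finset.prod_Icc_succ_top (by omega)]

lemma sgn_succ (j : ℤ) : ((-1:F16)) ^ (j+1).natAbs = -((-1:F16)) ^ j.natAbs := by
  rcases Int.even_or_odd j with he | ho
  · rw [(Int.natAbs_even.2 he).neg_one_pow, (Int.natAbs_odd.2 (he.add_one)).neg_one_pow]
  · rw [(Int.natAbs_odd.2 ho).neg_one_pow, (Int.natAbs_even.2 (ho.add_one)).neg_one_pow]
    ring

lemma ej_even (j : ℤ) : ∃ k : ℤ, j * (j-3) = 2 * k := by
  rcases Int.even_or_odd j with ⟨m, hm⟩ | ⟨m, hm⟩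
  · exact ⟨m * (j-3), by rw [hm]; ring⟩
  · exact ⟨j * (m-1), by rw [hm]; ring⟩

lemma Estep1 (j : ℤ) : (q16:F16) ^ ((j+1)*(j+1-3)/2+1) = q16 ^ (j*(j-3)/2+1) * q16 ^ (j-1) := by
  obtain ⟨k, hk⟩ := ej_even j
  have h1 : (j+1)*(j+1-3) = 2*(k+j-1) := by linear_combination hk
  rw [hk, h1, Int.mul_ediv_cancel_left _ (by norm_num), Int.mul_ediv_cancel_left _ (by norm_num),
    ← zpow_add₀ qne0]
  ring_nf

lemma Estep2 (j : ℤ) : (q16:F16) ^ ((j-1)*(j-1-3)/2+1) = q16 ^ (j*(j-3)/2+1) * q16 ^ (2-j) := by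
  obtain ⟨k, hk⟩ := ej_even j
  have h1 : (j-1)*(j-1-3) = 2*(k-j+2) := by linear_combination hk
  rw [hk, h1, Int.mul_ediv_cancel_left _ (by norm_num), Int.mul_ediv_cancel_left _ (by norm_num),
    ← zpow_add₀ qne0]
  ring_nf

/-- The coefficient function. -/
noncomputable def cf (n : ℕ) (j : ℤ) : F16 :=
  P16 (2 * n) / (P16 ((n : ℤ) + j).toNat * P16 ((n : ℤ) - j + 1).toNat) *
    (1 - q16 ^ (2 * j - 1)) * q16 ^ (j * (j - 3) / 2 + 1)

noncomputable def d16 (n : ℕ) (j : ℤ) : F16 :=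
  if -(n : ℤ) ≤ j ∧ j ≤ (n : ℤ) + 1 then ((-1 : F16)) ^ (j+1).natAbs * cf n j else 0

lemma d16_zero {n : ℕ} {j : ℤ} (h : j < -(n:ℤ) ∨ (n:ℤ) + 1 < j) : d16 n j = 0 := by
  rw [d16, if_neg (by omega)]

lemma zmerge (a b : ℤ) : (q16:F16)^a * q16^b = q16^(a+b) := (zpow_add₀ qne0 a b).symm

lemma znat (m : ℕ) (c : ℤ) (h : (m:ℤ) = c) : (q16:F16)^m = q16^c := by
  rw [← zpow_natCast q16 m, h]

lemma zmul1 (a : ℤ) : (q16:F16)^a * q16 = q16^(a+1) := (zpow_add_one₀ qne0 a).symm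

lemma one_sub_zpow_ne (c : ℤ) (k : ℕ) (h : c = (k:ℤ)+1) : (1:F16) - q16^c ≠ 0 := by
  rw [h, show ((k:ℤ)+1) = ((k+1:ℕ):ℤ) by push_cast; ring, zpow_natCast]
  exact oneSub k

set_option maxHeartbeats 2000000 in
lemma keyalg {K : Type*} [Field K] (PA PB P2 v w Q E : K) (hPA : PA ≠ 0) (hPB : PB ≠ 0)
    (h1 : 1 - v*v*w ≠ 0) (h2 : 1 - v*v*w*Q ≠ 0) (h3 : 1 - w*Q ≠ 0) (h4 : 1 - w*Q*Q ≠ 0) :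
    P2*(1-v*v*w*w*Q)*(1-v*v*w*w*Q*Q) / ((PA*(1-v*v*w)*(1-v*v*w*Q)) * (PB*(1-w*Q)*(1-w*Q*Q))) * (E*v*Q^3 - E*v^3*Q^2)
    = P2 / ((PA*(1-v*v*w)) * (PB*(1-w*Q))) * (E*v*Q^3 - E*v^3*Q^2) * (1+v*v*w*w)
    + v*w * (P2 / (PA * (PB*(1-w*Q)*(1-w*Q*Q))) * (E*Q^5 - E*v^2*Q^2))
    + v*w * (P2 / ((PA*(1-v*v*w)*(1-v*v*w*Q)) * PB) * (E*v^2*Q^2 - E*v^4*Q^3)) := by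
  have hD1 : (PA*(1-v*v*w)) * (PB*(1-w*Q)) ≠ 0 :=
    mul_ne_zero (mul_ne_zero hPA h1) (mul_ne_zero hPB h3)
  have hD2 : PA * (PB*(1-w*Q)*(1-w*Q*Q)) ≠ 0 :=
    mul_ne_zero hPA (mul_ne_zero (mul_ne_zero hPB h3) h4)
  have hD3 : (PA*(1-v*v*w)*(1-v*v*w*Q)) * PB ≠ 0 :=
    mul_ne_zero (mul_ne_zero (mul_ne_zero hPA h1) h2) hPB
  have hD : (PA*(1-v*v*w)*(1-v*v*w*Q)) * (PB*(1-w*Q)*(1-w*Q*Q)) ≠ 0 :=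
    mul_ne_zero (mul_ne_zero (mul_ne_zero hPA h1) h2) (mul_ne_zero (mul_ne_zero hPB h3) h4)
  simp only [div_mul_eq_mul_div, mul_div_assoc']
  rw [div_add_div _ _ hD1 hD2, div_add_div _ _ (mul_ne_zero hD1 hD2) hD3,
    div_eq_div_iff hD (mul_ne_zero (mul_ne_zero hD1 hD2) hD3)]
  ring

set_option maxHeartbeats 4000000 in
lemma cf_interior (n : ℕ) (j : ℤ) (h1 : -(n:ℤ) + 1 ≤ j) (h2 : j ≤ (n:ℤ)) :
    cf (n+1) j = cf n j * (1 + q16 ^ (2*n)) + q16 ^ n * cf n (j-1) + q16 ^ n * cf n (j+1) := by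
  obtain ⟨A, hA⟩ : ∃ A : ℕ, (n:ℤ) + j = (A:ℤ) + 1 := ⟨((n:ℤ)+j-1).toNat, by omega⟩
  obtain ⟨B, hB⟩ : ∃ B : ℕ, (n:ℤ) - j + 1 = (B:ℤ) + 1 := ⟨((n:ℤ)-j).toNat, by omega⟩
  have hv : (q16:F16) ^ (j:ℤ) ≠ 0 := zpow_ne_zero _ qne0
  set v : F16 := q16 ^ (j:ℤ) with hvdef
  set w : F16 := q16 ^ ((n:ℤ)-j) with hwdef
  set E : F16 := q16 ^ (j*(j-3)/2+1) with hEdef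
  simp only [cf]
  push_cast
  rw [show ((n:ℤ) + 1 + j).toNat = A + 2 by omega,
      show ((n:ℤ) + 1 - j + 1).toNat = B + 2 by omega,
      show ((n:ℤ) + j).toNat = A + 1 by omega,
      show ((n:ℤ) - j + 1).toNat = B + 1 by omega,
      show ((n:ℤ) + (j-1)).toNat = A by omega,
      show ((n:ℤ) - (j-1) + 1).toNat = B + 2 by omega,
      show ((n:ℤ) + (j+1)).toNat = A + 2 by omega,
      show ((n:ℤ) - (j+1) + 1).toNat = B by omega,
      show 2 * (n+1) = 2*n+1+1 by ring, Psucc (2*n+1), Psucc (2*n),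
      show A + 2 = A + 1 + 1 by ring, Psucc (A+1), Psucc A,
      show B + 2 = B + 1 + 1 by ring, Psucc (B+1), Psucc B]
  have eA1 : (q16:F16)^(A+1) = v*v*w := by
    rw [hvdef, hwdef, zmerge, zmerge]; exact znat _ _ (by omega)
  have eA2 : (q16:F16)^(A+1+1) = v*v*w*q16 := by
    rw [hvdef, hwdef, zmerge, zmerge, zmul1]; exact znat _ _ (by push_cast; omega)
  have eB1 : (q16:F16)^(B+1) = w*q16 := by
    rw [hwdef, zmul1]; exact znat _ _ (by omega)
  have eB2 : (q16:F16)^(B+1+1) = w*q16*q16 := by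
    rw [hwdef, zmul1, zmul1]; exact znat _ _ (by push_cast; omega)
  have f2n1 : (q16:F16)^(2*n+1) = v*v*w*w*q16 := by
    rw [hvdef, hwdef, zmerge, zmerge, zmerge, zmul1]; exact znat _ _ (by push_cast; omega)
  have f2n2 : (q16:F16)^(2*n+1+1) = v*v*w*w*q16*q16 := by
    rw [hvdef, hwdef, zmerge, zmerge, zmerge, zmul1, zmul1]; exact znat _ _ (by push_cast; omega)
  have f2n : (q16:F16)^(2*n) = v*v*w*w := by
    rw [hvdef, hwdef, zmerge, zmerge, zmerge]; exact znat _ _ (by push_cast; omega)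
  have fn : (q16:F16)^n = v*w := by
    rw [hvdef, hwdef, zmerge]; exact znat _ _ (by omega)
  simp only [eA1, eA2, eB1, eB2, f2n1, f2n2, f2n, fn]
  -- now prove the scaled identity
  apply mul_right_cancel₀ (b := q16 ^ ((j:ℤ)+3)) (zpow_ne_zero _ qne0)
  have hPA := Pne0 A
  have hPB := Pne0 B
  have m1 : E * q16^((j:ℤ)+3) = E * v * q16^3 := by
    rw [hEdef, hvdef, zmerge, ← zpow_natCast q16 3, zmerge, zmerge]
    congr 1; push_cast; ring
  have m2 : q16^(2*j-1) * E * q16^((j:ℤ)+3) = E * v^3 * q16^2 := by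
    rw [hEdef, hvdef, zmerge, zmerge, ← zpow_natCast (q16 ^ (j:ℤ)) 3, ← zpow_mul,
      ← zpow_natCast q16 2, zmerge, zmerge]
    congr 1; push_cast; ring
  have m3 : q16^((j-1)*(j-1-3)/2+1) * q16^((j:ℤ)+3) = E * q16^5 := by
    rw [Estep2, hEdef, zmerge, zmerge, ← zpow_natCast q16 5, zmerge]
    congr 1; push_cast; ring
  have m4 : q16^(2*(j-1)-1) * q16^((j-1)*(j-1-3)/2+1) * q16^((j:ℤ)+3) = E * v^2 * q16^2 := by
    rw [Estep2, hEdef, hvdef, zmerge, zmerge, zmerge, ← zpow_natCast (q16 ^ (j:ℤ)) 2, ← zpow_mul,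
      ← zpow_natCast q16 2, zmerge, zmerge]
    congr 1; push_cast; ring
  have m5 : q16^((j+1)*(j+1-3)/2+1) * q16^((j:ℤ)+3) = E * v^2 * q16^2 := by
    rw [Estep1, hEdef, hvdef, zmerge, zmerge, ← zpow_natCast (q16 ^ (j:ℤ)) 2, ← zpow_mul,
      ← zpow_natCast q16 2, zmerge, zmerge]
    congr 1; push_cast; ring
  have m6 : q16^(2*(j+1)-1) * q16^((j+1)*(j+1-3)/2+1) * q16^((j:ℤ)+3) = E * v^4 * q16^3 := by
    rw [Estep1, hEdef, hvdef, zmerge, zmerge, zmerge, ← zpow_natCast (q16 ^ (j:ℤ)) 4, ← zpow_mul,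
      ← zpow_natCast q16 3, zmerge, zmerge]
    congr 1; push_cast; ring
  have k := keyalg (P16 A) (P16 B) (P16 (2*n)) v w q16 E hPA hPB
    (by rw [hvdef, hwdef, zmerge, zmerge]; exact one_sub_zpow_ne _ A (by omega))
    (by rw [hvdef, hwdef, zmerge, zmerge, zmul1]; exact one_sub_zpow_ne _ (A+1) (by push_cast; omega))
    (by rw [hwdef, zmul1]; exact one_sub_zpow_ne _ B (by omega))
    (by rw [hwdef, zmul1, zmul1]; exact one_sub_zpow_ne _ (B+1) (by push_cast; omega))
  linear_combination k
    + ((P16 (2*n)*(1-v*v*w*w*q16)*(1-v*v*w*w*q16*q16) /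
          ((P16 A*(1-v*v*w)*(1-v*v*w*q16)) * (P16 B*(1-w*q16)*(1-w*q16*q16))))
       - (P16 (2*n) / ((P16 A*(1-v*v*w)) * (P16 B*(1-w*q16))) * (1+v*v*w*w))) * (m1 - m2)
    - (v*w * (P16 (2*n) / (P16 A * (P16 B*(1-w*q16)*(1-w*q16*q16))))) * (m3 - m4)
    - (v*w * (P16 (2*n) / ((P16 A*(1-v*v*w)*(1-v*v*w*q16)) * P16 B))) * (m5 - m6)

lemma P16_zero : P16 0 = 1 := by simp [P16]

set_option maxHeartbeats 1000000 in
lemma cf_top2 (n : ℕ) (j : ℤ) (hj : j = (n:ℤ)+2) :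
    cf (n+1) j = q16 ^ n * cf n (j-1) := by
  simp only [cf]
  push_cast
  rw [show ((n:ℤ) + 1 + j).toNat = 2*n+2+1 by omega,
      show ((n:ℤ) + 1 - j + 1).toNat = 0 by omega,
      show ((n:ℤ) + (j-1)).toNat = 2*n+1 by omega,
      show ((n:ℤ) - (j-1) + 1).toNat = 0 by omega,
      P16_zero, show 2 * (n+1) = 2*n+2 by ring, Psucc (2*n+2), Psucc (2*n), mul_one, mul_one]
  have g1 : (q16:F16)^(2*j-1) = q16^(2*n+2+1) := by
    rw [← zpow_natCast q16 (2*n+2+1)]; congr 1; omega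
  have g2 : (q16:F16)^(2*(j-1)-1) = q16^(2*n+1) := by
    rw [← zpow_natCast q16 (2*n+1)]; congr 1; omega
  have mA : q16^n * q16^((j-1)*(j-1-3)/2+1) = (q16:F16)^(j*(j-3)/2+1) := by
    rw [Estep2, ← zpow_natCast q16 n, mul_comm (q16^((n:ℕ):ℤ)) _, mul_assoc, zmerge,
      show (2-j)+(n:ℤ) = 0 by omega, zpow_zero, mul_one]
  rw [g1, g2]
  have hP := Pne0 (2*n)
  have o1 := oneSub (2*n)
  have o2 := oneSub (2*n+1)
  have o3 := oneSub (2*n+2)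
  have hD1 : P16 (2*n+2) * (1 - q16^(2*n+2+1)) ≠ 0 := mul_ne_zero (Pne0 _) o3
  have hD2 : P16 (2*n) * (1 - q16^(2*n+1)) ≠ 0 := mul_ne_zero hP o1
  simp only [div_mul_eq_mul_div, mul_div_assoc']
  rw [div_eq_div_iff hD1 hD2]
  linear_combination (-(P16 (2*n+2) * (1 - q16^(2*n+2+1)) * (P16 (2*n) * (1 - q16^(2*n+1))))) * mA

lemma P16_one : P16 1 = 1 - q16 := by simp [P16]

lemma one_sub_q_ne : (1:F16) - q16 ≠ 0 := by
  have := oneSub 0; rwa [pow_one] at this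

set_option maxHeartbeats 1000000 in
lemma cf_top1 (n : ℕ) (j : ℤ) (hj : j = (n:ℤ)+1) :
    cf (n+1) j = cf n j * (1 + q16 ^ (2*n)) + q16 ^ n * cf n (j-1) := by
  simp only [cf]
  push_cast
  rw [show ((n:ℤ) + 1 + j).toNat = 2*n+2 by omega,
      show ((n:ℤ) + 1 - j + 1).toNat = 1 by omega,
      show ((n:ℤ) + j).toNat = 2*n+1 by omega,
      show ((n:ℤ) - j + 1).toNat = 0 by omega,
      show ((n:ℤ) + (j-1)).toNat = 2*n by omega,
      show ((n:ℤ) - (j-1) + 1).toNat = 1 by omega,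
      P16_zero, P16_one, mul_one, show 2 * (n+1) = 2*n+2 by ring, Psucc (2*n)]
  have g1 : (q16:F16)^(2*j-1) = q16^(2*n+1) := by
    rw [← zpow_natCast q16 (2*n+1)]; congr 1; omega
  have mB : q16^n * q16^((j-1)*(j-1-3)/2+1) = q16 * (q16:F16)^(j*(j-3)/2+1) := by
    rw [Estep2, ← zpow_natCast q16 n, mul_comm (q16^((n:ℕ):ℤ)) _, mul_assoc, zmerge,
      show (2-j)+(n:ℤ) = 1 by omega, zpow_one, mul_comm]
  have mC : q16^(2*(j-1)-1) * (q16^n * q16^((j-1)*(j-1-3)/2+1)) =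
      q16^(2*n) * (q16:F16)^(j*(j-3)/2+1) := by
    rw [Estep2, ← zpow_natCast q16 n, ← zpow_natCast q16 (2*n)]
    rw [show (q16:F16)^(2*(j-1)-1) * (q16^((n:ℕ):ℤ) * (q16^(j*(j-3)/2+1) * q16^(2-j))) =
      (q16^(2*(j-1)-1) * q16^((n:ℕ):ℤ) * q16^(2-j)) * q16^(j*(j-3)/2+1) from by ring,
      zmerge, zmerge]
    congr 2
    omega
  rw [g1]
  have hP := Pne0 (2*n)
  have o1 := oneSub (2*n)
  have hD1 : P16 (2*n) * (1 - q16^(2*n+1)) ≠ 0 := mul_ne_zero hP o1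
  have hD2 : P16 (2*n) * (1 - q16) ≠ 0 := mul_ne_zero hP one_sub_q_ne
  have hDL : P16 (2*n+2) * (1 - q16) ≠ 0 := mul_ne_zero (Pne0 _) one_sub_q_ne
  simp only [div_mul_eq_mul_div, mul_div_assoc']
  rw [div_add_div _ _ hD1 hD2, div_eq_div_iff hDL (mul_ne_zero hD1 hD2)]
  linear_combination (-(P16 (2*n) * (1 - q16^(2*n+1)) * (P16 (2*n+2) * (1 - q16)) *
    P16 (2*n))) * (mB - mC)

set_option maxHeartbeats 1000000 in
lemma cf_bot1 (n : ℕ) (j : ℤ) (hj : j = -(n:ℤ)) :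
    cf (n+1) j = cf n j * (1 + q16 ^ (2*n)) + q16 ^ n * cf n (j+1) := by
  simp only [cf]
  push_cast
  rw [show ((n:ℤ) + 1 + j).toNat = 1 by omega,
      show ((n:ℤ) + 1 - j + 1).toNat = 2*n+2 by omega,
      show ((n:ℤ) + j).toNat = 0 by omega,
      show ((n:ℤ) - j + 1).toNat = 2*n+1 by omega,
      show ((n:ℤ) + (j+1)).toNat = 1 by omega,
      show ((n:ℤ) - (j+1) + 1).toNat = 2*n by omega,
      P16_zero, P16_one, one_mul, show 2 * (n+1) = 2*n+2 by ring, Psucc (2*n)]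
  apply mul_right_cancel₀ (b := q16^(2*n+1)) (pow_ne_zero _ qne0)
  have m1 : (q16:F16)^(2*j-1) * q16^(2*n+1) = 1 := by
    rw [← zpow_natCast q16 (2*n+1), zmerge, show 2*j-1+((2*n+1:ℕ):ℤ) = 0 by omega, zpow_zero]
  have mD : q16^n * q16^((j+1)*(j+1-3)/2+1) * q16^(2*n+1) =
      q16^(2*n) * (q16:F16)^(j*(j-3)/2+1) := by
    rw [Estep1, ← zpow_natCast q16 n, ← zpow_natCast q16 (2*n+1), ← zpow_natCast q16 (2*n)]
    rw [show (q16:F16)^((n:ℕ):ℤ) * (q16^(j*(j-3)/2+1) * q16^(j-1)) * q16^(((2*n+1:ℕ)):ℤ) =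
        (q16^((n:ℕ):ℤ) * q16^(j-1) * q16^(((2*n+1:ℕ)):ℤ)) * q16^(j*(j-3)/2+1) from by ring,
      zmerge, zmerge]
    congr 2
    omega
  have mE : q16^(2*(j+1)-1) * (q16^n * q16^((j+1)*(j+1-3)/2+1) * q16^(2*n+1)) =
      q16 * (q16:F16)^(j*(j-3)/2+1) := by
    rw [Estep1, ← zpow_natCast q16 n, ← zpow_natCast q16 (2*n+1)]
    rw [show (q16:F16)^(2*(j+1)-1) * (q16^((n:ℕ):ℤ) * (q16^(j*(j-3)/2+1) * q16^(j-1)) *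
          q16^(((2*n+1:ℕ)):ℤ)) =
        (q16^(2*(j+1)-1) * q16^((n:ℕ):ℤ) * q16^(j-1) * q16^(((2*n+1:ℕ)):ℤ)) *
          q16^(j*(j-3)/2+1) from by ring,
      zmerge, zmerge, zmerge, show 2*(j+1)-1+((n:ℕ):ℤ)+(j-1)+((2*n+1:ℕ):ℤ) = 1 by omega,
      zpow_one]
  have hP := Pne0 (2*n)
  have o1 := oneSub (2*n)
  have hD1 : P16 (2*n) * (1 - q16^(2*n+1)) ≠ 0 := mul_ne_zero hP o1
  have hD2 : (1 - q16) * P16 (2*n) ≠ 0 := mul_ne_zero one_sub_q_ne hP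
  have hDL : (1 - q16) * P16 (2*n+2) ≠ 0 := mul_ne_zero one_sub_q_ne (Pne0 _)
  rw [add_mul]
  simp only [div_mul_eq_mul_div, mul_div_assoc']
  rw [div_add_div _ _ hD1 hD2, div_eq_div_iff hDL (mul_ne_zero hD1 hD2)]
  linear_combination
    (-(P16 (2*n+2) * q16^(j*(j-3)/2+1) * (P16 (2*n) * (1 - q16^(2*n+1))) * ((1 - q16) * P16 (2*n)))
      + P16 (2*n) * q16^(j*(j-3)/2+1) * (1 + q16^(2*n)) * ((1 - q16) * P16 (2*n)) *
        ((1 - q16) * P16 (2*n+2))) * m1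
    - ((P16 (2*n) * (1 - q16^(2*n+1))) * P16 (2*n) * ((1 - q16) * P16 (2*n+2))) * mD
    + ((P16 (2*n) * (1 - q16^(2*n+1))) * P16 (2*n) * ((1 - q16) * P16 (2*n+2))) * mE

set_option maxHeartbeats 1000000 in
lemma cf_bot2 (n : ℕ) (j : ℤ) (hj : j = -(n:ℤ)-1) :
    cf (n+1) j = q16 ^ n * cf n (j+1) := by
  simp only [cf]
  push_cast
  rw [show ((n:ℤ) + 1 + j).toNat = 0 by omega,
      show ((n:ℤ) + 1 - j + 1).toNat = 2*n+2+1 by omega,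
      show ((n:ℤ) + (j+1)).toNat = 0 by omega,
      show ((n:ℤ) - (j+1) + 1).toNat = 2*n+1 by omega,
      show 2 * (n+1) = 2*n+2 by ring, Psucc (2*n+2), Psucc (2*n)]
  simp only [P16_zero, one_mul]
  apply mul_right_cancel₀ (b := q16^(2*n+2+1)) (pow_ne_zero _ qne0)
  have m1 : (q16:F16)^(2*j-1) * q16^(2*n+2+1) = 1 := by
    rw [← zpow_natCast q16 (2*n+2+1), zmerge, show 2*j-1+((2*n+2+1:ℕ):ℤ) = 0 by omega, zpow_zero]
  have mD : q16^n * q16^((j+1)*(j+1-3)/2+1) * q16^(2*n+2+1) =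
      q16^(2*n+1) * (q16:F16)^(j*(j-3)/2+1) := by
    rw [Estep1, ← zpow_natCast q16 n, ← zpow_natCast q16 (2*n+2+1), ← zpow_natCast q16 (2*n+1)]
    rw [show (q16:F16)^((n:ℕ):ℤ) * (q16^(j*(j-3)/2+1) * q16^(j-1)) * q16^(((2*n+2+1:ℕ)):ℤ) =
        (q16^((n:ℕ):ℤ) * q16^(j-1) * q16^(((2*n+2+1:ℕ)):ℤ)) * q16^(j*(j-3)/2+1) from by ring,
      zmerge, zmerge]
    congr 2
    omega
  have mE : q16^(2*(j+1)-1) * (q16^n * q16^((j+1)*(j+1-3)/2+1) * q16^(2*n+2+1)) =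
      (q16:F16)^(j*(j-3)/2+1) := by
    rw [Estep1, ← zpow_natCast q16 n, ← zpow_natCast q16 (2*n+2+1)]
    rw [show (q16:F16)^(2*(j+1)-1) * (q16^((n:ℕ):ℤ) * (q16^(j*(j-3)/2+1) * q16^(j-1)) *
          q16^(((2*n+2+1:ℕ)):ℤ)) =
        (q16^(2*(j+1)-1) * q16^((n:ℕ):ℤ) * q16^(j-1) * q16^(((2*n+2+1:ℕ)):ℤ)) *
          q16^(j*(j-3)/2+1) from by ring,
      zmerge, zmerge, zmerge, show 2*(j+1)-1+((n:ℕ):ℤ)+(j-1)+((2*n+2+1:ℕ):ℤ) = 0 by omega,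
      zpow_zero, one_mul]
  have hDL : P16 (2*n+2) * (1 - q16^(2*n+2+1)) ≠ 0 := mul_ne_zero (Pne0 _) (oneSub _)
  have hDR : P16 (2*n) * (1 - q16^(2*n+1)) ≠ 0 := mul_ne_zero (Pne0 _) (oneSub _)
  simp only [div_mul_eq_mul_div, mul_div_assoc']
  rw [div_eq_div_iff hDL hDR]
  linear_combination
    (-(P16 (2*n+2) * q16^(j*(j-3)/2+1) * (P16 (2*n) * (1 - q16^(2*n+1))))) * m1
    - (P16 (2*n) * (P16 (2*n+2) * (1 - q16^(2*n+2+1)))) * mD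
    + (P16 (2*n) * (P16 (2*n+2) * (1 - q16^(2*n+2+1)))) * mE

lemma d16_pos {n : ℕ} {j : ℤ} (h1 : -(n:ℤ) ≤ j) (h2 : j ≤ (n:ℤ)+1) :
    d16 n j = (-1:F16)^((j+1).natAbs) * cf n j := by
  rw [d16, if_pos ⟨h1, h2⟩]

lemma drec (n : ℕ) (j : ℤ) :
    d16 (n+1) j = d16 n j * (1 + q16^(2*n)) - q16^n * d16 n (j-1) - q16^n * d16 n (j+1) := by
  rcases eq_or_ne j ((n:ℤ)+2) with hj | k1
  · rw [d16_pos (by push_cast; omega) (by push_cast; omega),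
      d16_zero (j := j) (by omega), d16_zero (j := j+1) (by omega),
      d16_pos (n := n) (j := j-1) (by omega) (by omega), cf_top2 n j hj,
      show j - 1 + 1 = j by ring, sgn_succ j]
    ring
  rcases eq_or_ne j ((n:ℤ)+1) with hj | k2
  · rw [d16_pos (by push_cast; omega) (by push_cast; omega),
      d16_pos (n := n) (j := j) (by omega) (by omega),
      d16_pos (n := n) (j := j-1) (by omega) (by omega),
      d16_zero (j := j+1) (by omega), cf_top1 n j hj,
      show j - 1 + 1 = j by ring, sgn_succ j]
    ring
  rcases eq_or_ne j (-(n:ℤ)) with hj | k3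
  · rw [d16_pos (by push_cast; omega) (by push_cast; omega),
      d16_pos (n := n) (j := j) (by omega) (by omega),
      d16_zero (j := j-1) (by omega),
      d16_pos (n := n) (j := j+1) (by omega) (by omega), cf_bot1 n j hj,
      sgn_succ (j+1)]
    ring
  rcases eq_or_ne j (-(n:ℤ)-1) with hj | k4
  · rw [d16_pos (by push_cast; omega) (by push_cast; omega),
      d16_zero (j := j) (by omega), d16_zero (j := j-1) (by omega),
      d16_pos (n := n) (j := j+1) (by omega) (by omega), cf_bot2 n j hj,
      sgn_succ (j+1)]
    ring
  by_cases hin : -(n:ℤ)+1 ≤ j ∧ j ≤ (n:ℤ)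
  · rw [d16_pos (by push_cast; omega) (by push_cast; omega),
      d16_pos (n := n) (j := j) (by omega) (by omega),
      d16_pos (n := n) (j := j-1) (by omega) (by omega),
      d16_pos (n := n) (j := j+1) (by omega) (by omega),
      cf_interior n j hin.1 hin.2, show j - 1 + 1 = j by ring, sgn_succ (j+1), sgn_succ j]
    ring
  · rw [d16_zero (by push_cast; omega), d16_zero (j := j) (by omega),
      d16_zero (j := j-1) (by omega), d16_zero (j := j+1) (by omega)]
    ring

noncomputable def Ssum (n : ℕ) : LaurentPolynomial F16 :=
  ∑ j ∈ Finset.Icc (-(n:ℤ)) ((n:ℤ)+1), C (d16 n j) * T j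

lemma shift_sum (f : ℤ → LaurentPolynomial F16) (a b c : ℤ) :
    ∑ j ∈ Finset.Icc a b, f (j+c) = ∑ j ∈ Finset.Icc (a+c) (b+c), f j := by
  rw [← Finset.map_add_right_Icc, Finset.sum_map]
  rfl

lemma TmulT : (T 1 * T (-1) : LaurentPolynomial F16) = 1 := by
  rw [← T_add]; norm_num

lemma step16 (n : ℕ) :
    Ssum n * ((1 - T 1 * C (q16^n)) * (1 - T (-1) * C (q16^n))) = Ssum (n+1) := by
  have hsub : Finset.Icc (-(n:ℤ)) ((n:ℤ)+1) ⊆ Finset.Icc (-(n:ℤ)-1) ((n:ℤ)+2) :=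
    Finset.Icc_subset_Icc (by omega) (by omega)
  symm
  calc Ssum (n+1)
      = ∑ j ∈ Finset.Icc (-(n:ℤ)-1) ((n:ℤ)+2), C (d16 (n+1) j) * T j := by
        rw [Ssum, show (-(((n+1):ℕ):ℤ)) = (-(n:ℤ)-1) by push_cast; ring,
          show (((((n+1):ℕ)):ℤ)+1) = ((n:ℤ)+2) by push_cast; ring]
    _ = ∑ j ∈ Finset.Icc (-(n:ℤ)-1) ((n:ℤ)+2),
          (C (d16 n j) * C (1 + q16^(2*n)) * T j
            - C (q16^n) * C (d16 n (j-1)) * T j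
            - C (q16^n) * C (d16 n (j+1)) * T j) := by
        refine Finset.sum_congr rfl fun j _ => ?_
        rw [drec n j, map_sub, map_sub, map_mul, map_mul, map_mul]
        ring
    _ = (∑ j ∈ Finset.Icc (-(n:ℤ)-1) ((n:ℤ)+2), C (d16 n j) * C (1 + q16^(2*n)) * T j)
        - (∑ j ∈ Finset.Icc (-(n:ℤ)-1) ((n:ℤ)+2), C (q16^n) * C (d16 n (j-1)) * T j)
        - (∑ j ∈ Finset.Icc (-(n:ℤ)-1) ((n:ℤ)+2), C (q16^n) * C (d16 n (j+1)) * T j) := by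
        rw [Finset.sum_sub_distrib, Finset.sum_sub_distrib]
    _ = (∑ j ∈ Finset.Icc (-(n:ℤ)) ((n:ℤ)+1), C (d16 n j) * C (1 + q16^(2*n)) * T j)
        - (∑ j ∈ Finset.Icc (-(n:ℤ)) ((n:ℤ)+1), C (q16^n) * C (d16 n j) * T (j+1))
        - (∑ j ∈ Finset.Icc (-(n:ℤ)) ((n:ℤ)+1), C (q16^n) * C (d16 n j) * T (j-1)) := by
        congr 1
        congr 1
        · exact (Finset.sum_subset hsub (fun j _ hj => by
            rw [d16_zero (by rcases Finset.mem_Icc.not.mp hj with h; omega), map_zero,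
              zero_mul, zero_mul])).symm
        · rw [show ∑ j ∈ Finset.Icc (-(n:ℤ)-1) ((n:ℤ)+2), C (q16^n) * C (d16 n (j-1)) * T j
              = ∑ j ∈ Finset.Icc (-(n:ℤ)-2) ((n:ℤ)+1),
                  C (q16^n) * C (d16 n j) * T (j+1) from by
            rw [show (-(n:ℤ)-1) = (-(n:ℤ)-2)+1 by ring, show ((n:ℤ)+2) = ((n:ℤ)+1)+1 by ring,
              ← shift_sum (fun j => C (q16^n) * C (d16 n (j-1)) * T j) (-(n:ℤ)-2) ((n:ℤ)+1) 1]
            refine Finset.sum_congr rfl fun j _ => ?_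
            rw [show j + 1 - 1 = j by ring]]
          exact (Finset.sum_subset (Finset.Icc_subset_Icc (by omega) (by omega))
            (fun j _ hj => by
              have hj' : ¬(-(n:ℤ) ≤ j ∧ j ≤ (n:ℤ)+1) := fun h => hj (Finset.mem_Icc.mpr h)
              simp [d16_zero (n := n) (j := j) (by omega)])).symm
        · rw [show ∑ j ∈ Finset.Icc (-(n:ℤ)-1) ((n:ℤ)+2), C (q16^n) * C (d16 n (j+1)) * T j
              = ∑ j ∈ Finset.Icc (-(n:ℤ)) ((n:ℤ)+3),
                  C (q16^n) * C (d16 n j) * T (j-1) from by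
            rw [show (-(n:ℤ)-1) = (-(n:ℤ))+(-1) by ring, show ((n:ℤ)+2) = ((n:ℤ)+3)+(-1) by ring,
              ← shift_sum (fun j => C (q16^n) * C (d16 n (j+1)) * T j) (-(n:ℤ)) ((n:ℤ)+3) (-1)]
            refine Finset.sum_congr rfl fun j _ => ?_
            rw [show j + -1 + 1 = j by ring, show j + -1 = j - 1 by ring]]
          exact (Finset.sum_subset (Finset.Icc_subset_Icc (by omega) (by omega))
            (fun j _ hj => by
              have hj' : ¬(-(n:ℤ) ≤ j ∧ j ≤ (n:ℤ)+1) := fun h => hj (Finset.mem_Icc.mpr h)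
              simp [d16_zero (n := n) (j := j) (by omega)])).symm
    _ = Ssum n * ((1 - T 1 * C (q16^n)) * (1 - T (-1) * C (q16^n))) := by
        rw [Ssum, Finset.sum_mul, ← Finset.sum_sub_distrib, ← Finset.sum_sub_distrib]
        refine Finset.sum_congr rfl fun j _ => ?_
        rw [show T (j+1) = T j * T 1 from by rw [← T_add],
          show T (j-1) = T j * T (-1) from by rw [sub_eq_add_neg, ← T_add],
          map_add, map_one, show (q16:F16)^(2*n) = q16^n * q16^n from by
            rw [two_mul, pow_add], map_mul]
        linear_combination (-(C (q16^n) * C (q16^n) * (C (d16 n j) * T j))) * TmulT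

lemma cf00 : cf 0 0 = -1 := by
  rw [cf]
  norm_num [P16_zero, P16_one]
  have h1 := one_sub_q_ne
  have h2 := qne0
  field_simp
  ring
lemma cf01 : cf 0 1 = 1 := by
  rw [cf]
  norm_num [P16_zero, P16_one]
  exact inv_mul_cancel₀ one_sub_q_ne

lemma main16 (n : ℕ) :
    (1 + (T 1 : LaurentPolynomial F16)) *
      ∏ j ∈ Finset.range n,
        ((1 - (T 1 : LaurentPolynomial F16) * C (q16 ^ j)) *
          (1 - (T (-1) : LaurentPolynomial F16) * C (q16 ^ j))) = Ssum n := by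
  induction n with
  | zero =>
    rw [Ssum]
    norm_num
    rw [show Finset.Icc (0:ℤ) 1 = insert (0:ℤ) {1} from by
        apply Finset.ext; intro x; simp [Finset.mem_Icc]; omega,
      Finset.sum_insert (by norm_num), Finset.sum_singleton]
    rw [d16_pos (by norm_num) (by norm_num), d16_pos (by norm_num) (by norm_num), cf00, cf01]
    norm_num [T_zero]
  | succ n ih =>
    rw [Finset.prod_range_succ, show ∀ a b c : LaurentPolynomial F16, a * (b * c) = (a * b) * c
      from fun a b c => by ring, ih, step16]


/-- Proposition 4.1 of Garvan: for every `n ≥ 0`,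
`(1+z) (z;q)_n (z⁻¹;q)_n = ∑_{j=-n}^{n+1} (-1)^{j+1}
  (q;q)_{2n} / ((q;q)_{n+j} (q;q)_{n-j+1}) (1-q^{2j-1}) z^j q^{j(j-3)/2+1}`,
in the ring of Laurent polynomials in `z` (with `z = T 1`, `z⁻¹ = T (-1)`,
`z^j = T j`) over the field of rational functions in `q`. -/
theorem stmt16 :
    ∀ n : ℕ,
      (1 + (T 1 : LaurentPolynomial F16)) *
          ∏ j ∈ Finset.range n,
            ((1 - (T 1 : LaurentPolynomial F16) * C (q16 ^ j)) *
              (1 - (T (-1) : LaurentPolynomial F16) * C (q16 ^ j))) =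
        ∑ j ∈ Finset.Icc (-(n : ℤ)) ((n : ℤ) + 1),
          (-1 : LaurentPolynomial F16) ^ (j + 1).natAbs *
            C (P16 (2 * n) / (P16 (n + j).toNat * P16 ((n : ℤ) - j + 1).toNat) *
                (1 - q16 ^ (2 * j - 1)) * q16 ^ (j * (j - 3) / 2 + 1)) *
            T j := by
  intro n
  rw [main16 n, Ssum]
  refine Finset.sum_congr rfl fun j hj => ?_
  obtain ⟨h1, h2⟩ := Finset.mem_Icc.mp hj
  rw [d16_pos h1 h2, cf, map_mul, map_pow, map_neg, map_one]
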